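/- The language { 0^m 1^m : m ∈ ℕ } over the alphabet {0,1} is recognized by a deterministic finite automaton with at most one inkdot of advice. -/

import Mathlib

def markWord {α : Type*} (w : List α) (S : Finset ℕ) : List (α × Bool) :=
  w.zipIdx.map (fun p => (p.1, decide (p.2 ∈ S)))

def RecognizedWithInkdots {α : Type*} (L : Set (List α)) (a : ℕ → ℕ) : Prop :=
  ∃ (σ : Type) (_ : Fintype σ) (M : DFA (α × Bool) σ) (h : ℕ → Finset ℕ),
    (∀ n, ∀ i ∈ h n, i < n) ∧
    (∀ n, (h n).card ≤ a n) ∧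
    (∀ w : List α, w ∈ L ↔ markWord w (h w.length) ∈ M.accepts)

/-! Put the inkdot at position `n / 2` when `n` is even and positive. A DFA can check that a nonempty
marked word has the shape `(0,·)^k (1,•) (1,·)^j`, i.e. that the word is `0^k 1^(j+1)` with the
dot on its first `1`; since the dot sits at `n / 2 = k`, this forces `k = j + 1`. -/

section
variable {α : Type*}

@[simp] lemma length_markWord (w : List α) (S : Finset ℕ) : (markWord w S).length = w.length := by
  simp [markWord]

lemma markWord_eq_iff (w : List α) (S : Finset ℕ) (x : List (α × Bool)) :
    markWord w S = x ↔
      x.map Prod.fst = w ∧ ∀ i (hi : i < x.length), x[i].2 = decide (i ∈ S) := by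
  constructor
  · rintro rfl
    refine ⟨?_, fun i hi => by simp [markWord]⟩
    simp [markWord, Function.comp_def]
  · rintro ⟨rfl, hsnd⟩
    apply List.ext_getElem (by simp)
    intro i h₁ h₂
    simp [markWord, ← hsnd i h₂]

@[simp] lemma map_fst_markWord (w : List α) (S : Finset ℕ) : (markWord w S).map Prod.fst = w :=
  ((markWord_eq_iff w S _).1 rfl).1

lemma mem_of_markWord_eq_append_cons {w : List α} {S : Finset ℕ} {l₁ l₂ : List (α × Bool)} {b : α}
    (h : markWord w S = l₁ ++ (b, true) :: l₂) : l₁.length ∈ S := by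
  have := ((markWord_eq_iff w S _).1 h).2 l₁.length (by simp)
  simpa using this

lemma markWord_replicate_append_cons_replicate (a b : α) (k j : ℕ) {S : Finset ℕ}
    (hS : ∀ i < k + j + 1, i ∈ S ↔ i = k) :
    markWord (.replicate k a ++ b :: .replicate j b) S =
      .replicate k (a, false) ++ (b, true) :: .replicate j (b, false) := by
  refine (markWord_eq_iff _ _ _).2 ⟨by simp, fun i hi => ?_⟩
  simp only [List.length_append, List.length_replicate, List.length_cons] at hi
  simp only [hS i (by omega), List.getElem_append, List.getElem_cons, List.length_replicate,
    List.getElem_replicate]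
  split_ifs <;> simp <;> omega
end

namespace ZeroOneInkdot

inductive State | start | zeros | ones | dead
deriving DecidableEq

instance : Fintype State := ⟨{.start, .zeros, .ones, .dead}, fun s => by cases s <;> simp⟩

def step : State → Bool × Bool → State
  | .start, (false, false) | .zeros, (false, false) => .zeros
  | .start, (true, true) | .zeros, (true, true) => .ones
  | .ones, (true, false) => .ones
  | _, _ => .dead

def dfa : DFA (Bool × Bool) State := ⟨step, .start, {.start, .ones}⟩

@[simp] lemma dfa_start : dfa.start = .start := rfl

@[simp] lemma dfa_step : dfa.step = step := rfl

@[simp] lemma mem_dfa_accept (s : State) : s ∈ dfa.accept ↔ s = .start ∨ s = .ones := Iff.rfl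

@[simp] lemma evalFrom_dead (x : List (Bool × Bool)) : dfa.evalFrom .dead x = .dead := by
  induction x with
  | nil => rfl
  | cons a x ih => rcases a with ⟨_ | _, _ | _⟩ <;> exact ih

lemma evalFrom_ones_mem_accept (x : List (Bool × Bool)) :
    dfa.evalFrom .ones x ∈ dfa.accept ↔ ∀ a ∈ x, a = (true, false) := by
  induction x with
  | nil => simp
  | cons a x ih =>
    rcases a with ⟨_ | _, _ | _⟩ <;> simp [DFA.evalFrom_cons, step, ih]

lemma evalFrom_zeros_mem_accept (x : List (Bool × Bool)) :
    dfa.evalFrom .zeros x ∈ dfa.accept ↔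
      ∃ k j, x = .replicate k (false, false) ++ (true, true) :: .replicate j (true, false) := by
  induction x with
  | nil => simp
  | cons a x ih =>
    rw [DFA.evalFrom_cons, dfa_step]
    rcases a with ⟨_ | _, _ | _⟩
    case false.false =>
      rw [step, ih]
      constructor
      · rintro ⟨k, j, rfl⟩
        exact ⟨k + 1, j, rfl⟩
      · rintro ⟨_ | k, j, hx⟩
        · simp at hx
        · exact ⟨k, j, by simpa [List.replicate_succ] using hx⟩
    case true.true =>
      rw [step, evalFrom_ones_mem_accept]
      constructor
      · exact fun h => ⟨0, x.length, by simpa [List.eq_replicate_iff] using h⟩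
      · rintro ⟨_ | k, j, hx⟩ <;> simp_all [List.replicate_succ]
    all_goals
      simp only [step, evalFrom_dead, mem_dfa_accept, reduceCtorEq, or_self, false_iff]
      rintro ⟨_ | k, j, hx⟩ <;> simp_all [List.replicate_succ]

lemma mem_dfa_accepts (x : List (Bool × Bool)) :
    x ∈ dfa.accepts ↔
      x = [] ∨ ∃ k j, x = .replicate k (false, false) ++ (true, true) :: .replicate j (true, false) := by
  rw [DFA.mem_accepts]
  rcases x with _ | ⟨a, x⟩
  · simp [DFA.eval]
  · have : step .start a = step .zeros a := by rcases a with ⟨_ | _, _ | _⟩ <;> rfl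
    rw [DFA.eval, DFA.evalFrom_cons, dfa_start, dfa_step, this, ← dfa_step, ← DFA.evalFrom_cons,
      evalFrom_zeros_mem_accept]
    simp

def advice (n : ℕ) : Finset ℕ := (Finset.range n).filter (fun i => 2 * i = n)

lemma mem_advice {n i : ℕ} : i ∈ advice n ↔ 0 < n ∧ 2 * i = n := by
  simp only [advice, Finset.mem_filter, Finset.mem_range]
  omega

lemma lt_of_mem_advice {n i : ℕ} (h : i ∈ advice n) : i < n :=
  Finset.mem_range.1 (Finset.mem_filter.1 h).1

lemma card_advice_le_one (n : ℕ) : (advice n).card ≤ 1 :=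
  Finset.card_le_one.2 fun i hi j hj => by rw [mem_advice] at hi hj; omega

end ZeroOneInkdot

open ZeroOneInkdot in
/-- `{0^m 1^m : m ∈ ℕ}` is recognized with at most one inkdot of advice
(`false` plays the role of `0` and `true` the role of `1`). -/
theorem zeros_ones_one_inkdot :
    RecognizedWithInkdots
      {w : List Bool | ∃ m : ℕ, w = List.replicate m false ++ List.replicate m true}
      (fun _ => 1) := by
  refine ⟨State, inferInstance, dfa, advice, fun _ _ => lt_of_mem_advice, card_advice_le_one,
    fun w => ?_⟩
  rw [Set.mem_ofPred_eq, mem_dfa_accepts]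
  constructor
  · rintro ⟨_ | m, rfl⟩
    · simp [markWord]
    · refine .inr ⟨m + 1, m, markWord_replicate_append_cons_replicate _ _ _ _ fun i hi => ?_⟩
      simp only [List.length_append, List.length_replicate, mem_advice]
      omega
  · rintro (h | ⟨k, j, h⟩)
    · exact ⟨0, by simpa using congrArg List.length h⟩
    · have hw : w = .replicate k false ++ .replicate (j + 1) true := by
        simpa [List.replicate_succ] using congrArg (List.map Prod.fst) h
      have hk : 2 * k = k + (j + 1) := by
        simpa [hw] using (mem_advice.1 (mem_of_markWord_eq_append_cons h)).2
      exact ⟨k, by rw [hw, show j + 1 = k by omega]⟩
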